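/- Let H ≥ γ be a semibounded self-adjoint operator with associated quadratic form h on the form domain Q(H). Then B (bounded on ℋ) is H-relatively compact if and only if: for every C > 0 and every sequence (ψₙ) in Q(H) with h[ψₙ] ≤ C, ‖ψₙ‖ ≤ C, and ψₙ → 0 weakly in ℋ, one has ‖Bψₙ‖ → 0. -/

import Mathlib

open MeasureTheory Set Filter Topology

noncomputable section

/-- The bounded Borel functional calculus of a self-adjoint operator on a complex
Hilbert space `ℋ`, encoded axiomatically: a star-algebra homomorphism from bounded
Borel functions on `ℝ` (only their values on the spectrum matter) into the bounded
operators, with the sup-norm bound and strong σ-continuity. This data is equivalent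
to the projection-valued spectral measure of a self-adjoint operator with the given
spectrum. -/
structure SelfAdjointCalculus (ℋ : Type) [NormedAddCommGroup ℋ]
    [InnerProductSpace ℂ ℋ] [CompleteSpace ℋ] where
  spectrum : Set ℝ
  spectrum_nonempty : spectrum.Nonempty
  spectrum_closed : IsClosed spectrum
  fc : (ℝ → ℂ) → (ℋ →L[ℂ] ℋ)
  fc_one : fc (fun _ => 1) = ContinuousLinearMap.id ℂ ℋ
  fc_add : ∀ f g, fc (f + g) = fc f + fc g
  fc_smul : ∀ (c : ℂ) (f), fc (c • f) = c • fc f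
  fc_mul : ∀ f g, fc (f * g) = (fc f).comp (fc g)
  fc_star : ∀ f, fc (fun t => starRingEnd ℂ (f t)) = ContinuousLinearMap.adjoint (fc f)
  fc_norm : ∀ (f) (C : ℝ), (∀ t ∈ spectrum, ‖f t‖ ≤ C) → ‖fc f‖ ≤ C
  fc_eqOn : ∀ f g, Set.EqOn f g spectrum → fc f = fc g
  fc_tendsto : ∀ (f : ℕ → ℝ → ℂ) (g : ℝ → ℂ) (C : ℝ),
    (∀ n t, ‖f n t‖ ≤ C) →
    (∀ t ∈ spectrum, Filter.Tendsto (fun n => f n t) Filter.atTop (nhds (g t))) →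
    ∀ x : ℋ, Filter.Tendsto (fun n => fc (f n) x) Filter.atTop (nhds (fc g x))
  fc_proj_infinite : ∀ l ∈ spectrum, ∀ ε > 0,
    fc (Set.indicator {t | dist t l < ε} (fun _ => 1)) ≠ 0

namespace SelfAdjointCalculus

variable {ℋ : Type} [NormedAddCommGroup ℋ] [InnerProductSpace ℂ ℋ] [CompleteSpace ℋ]

/-- The spectral projection `𝟙_I(H)`. -/
def proj (Φ : SelfAdjointCalculus ℋ) (I : Set ℝ) : ℋ →L[ℂ] ℋ :=
  Φ.fc (I.indicator (fun _ => 1))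

/-- `B` is `H`-relatively compact: `B ∘ 𝟙_I(H)` is compact for every bounded Borel set
`I ⊆ ℝ`. -/
def RelCompactWrt (B : ℋ →L[ℂ] ℋ) (Φ : SelfAdjointCalculus ℋ) : Prop :=
  ∀ I : Set ℝ, MeasurableSet I → Bornology.IsBounded I →
    IsCompactOperator (B.comp (Φ.proj I))

/-- The semigroup `e^{-tH}` given by the functional calculus. -/
def heat (Φ : SelfAdjointCalculus ℋ) (t : ℝ) : ℋ →L[ℂ] ℋ :=
  Φ.fc (fun x => Complex.exp (-(t * x)))

/-- The resolvent `(H - λ)⁻¹` given by the functional calculus. -/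
def resolvent (Φ : SelfAdjointCalculus ℋ) (l : ℂ) : ℋ →L[ℂ] ℋ :=
  Φ.fc (fun t => ((t : ℂ) - l)⁻¹)

/-- The resolvent set of the self-adjoint operator: complex numbers away from the
(real) spectrum. -/
def resolventSet (Φ : SelfAdjointCalculus ℋ) : Set ℂ :=
  {l : ℂ | ∀ t ∈ Φ.spectrum, (t : ℂ) ≠ l}

/-- Truncated quadratic form `(min(H,n) u | u)`, an approximation of `h[u]`. -/
def formApprox (Φ : SelfAdjointCalculus ℋ) (n : ℕ) (u : ℋ) : ℝ :=
  (inner ℂ (Φ.fc (fun t => ((min t (n : ℝ) : ℝ) : ℂ)) u) u : ℂ).re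

/-- `u` belongs to the form domain `Q(H)` of a semibounded operator: the truncated
quadratic forms stay bounded. -/
def InFormDomain (Φ : SelfAdjointCalculus ℋ) (u : ℋ) : Prop :=
  BddAbove (Set.range fun n => Φ.formApprox n u)

/-- The quadratic form `h[u] = (Hu|u)` (extended to the form domain). -/
def quadForm (Φ : SelfAdjointCalculus ℋ) (u : ℋ) : ℝ :=
  ⨆ n, Φ.formApprox n u

/-- The essential spectrum: points around which every spectral projection has
infinite-dimensional range. -/
def essSpectrum (Φ : SelfAdjointCalculus ℋ) : Set ℝ :=
  {l : ℝ | ∀ ε > 0, ¬ FiniteDimensional ℂ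
    (LinearMap.range ((Φ.proj (Set.Ioo (l - ε) (l + ε))) : ℋ →ₗ[ℂ] ℋ))}

end SelfAdjointCalculus

/-!
Split `ψ = 𝟙_{[γ,R]}(H) ψ + 𝟙_{(R,∞)}(H) ψ`. Since `H ≥ γ`, the form controls the high-energy
part: `R ‖𝟙_{(R,∞)}(H) ψ‖² ≤ h[ψ] + |γ| ‖ψ‖²`, which is uniformly small once `R` is large, while
the compact operator `B 𝟙_{[γ,R]}(H)` maps weakly null sequences to norm-null ones.
Conversely, `𝟙_I(H)` maps bounded weakly null sequences to bounded weakly null sequences of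
bounded form, `H` being bounded on the range of `𝟙_I(H)`; and on a Hilbert space an operator
sending every bounded weakly null sequence to a norm-null one is compact, because bounded
sequences have weakly convergent subsequences.
-/

theorem tendsto_zero_of_forall_le_add {α : Type*} {l : Filter α} {a : α → ℝ} (ha : ∀ x, 0 ≤ a x)
    (h : ∀ ε > 0, ∃ b : α → ℝ, Tendsto b l (𝓝 0) ∧ ∀ x, a x ≤ b x + ε) :
    Tendsto a l (𝓝 0) := by
  refine tendsto_order.2 ⟨fun c hc => Eventually.of_forall fun x => hc.trans_le (ha x),
    fun c hc => ?_⟩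
  obtain ⟨b, hb, hab⟩ := h (c / 2) (by linarith)
  filter_upwards [hb.eventually_lt_const (by linarith : (0 : ℝ) < c / 2)] with x hx
  linarith [hab x]

section WeakConvergence

variable {𝕜 E F : Type*} [RCLike 𝕜] [NormedAddCommGroup E] [InnerProductSpace 𝕜 E]
  [CompleteSpace E] [NormedAddCommGroup F] [InnerProductSpace 𝕜 F]

theorem exists_subseq_weakly_tendsto {x : ℕ → E} {M : ℝ} (hx : ∀ n, ‖x n‖ ≤ M) :
    ∃ (φ : ℕ → ℕ) (z : E), StrictMono φ ∧ ‖z‖ ≤ M ∧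
      ∀ y : E, Tendsto (fun k => inner 𝕜 y (x (φ k))) atTop (𝓝 (inner 𝕜 y z)) := by
  -- Banach–Alaoglu is sequential only on separable spaces, hence the passage to the closed span.
  set K := (Submodule.span 𝕜 (range x)).topologicalClosure
  have hxK (n : ℕ) : x n ∈ K :=
    Submodule.le_topologicalClosure _ (Submodule.subset_span ⟨n, rfl⟩)
  have : TopologicalSpace.SeparableSpace K :=
    (countable_range x).isSeparable.span.closure.separableSpace
  have : CompleteSpace K := (Submodule.isClosed_topologicalClosure _).completeSpace_coe
  set ℓ : ℕ → WeakDual 𝕜 K := fun n =>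
    StrongDual.toWeakDual (InnerProductSpace.toDual 𝕜 K ⟨x n, hxK n⟩)
  obtain ⟨L, hL, φ, hφ, hlim⟩ := WeakDual.isSeqCompact_closedBall 𝕜 K (0 : StrongDual 𝕜 K) M
    (x := ℓ) fun n => by simpa [ℓ] using hx n
  set z : E := ↑((InnerProductSpace.toDual 𝕜 K).symm (WeakDual.toStrongDual L))
  refine ⟨φ, z, hφ, ?_, fun y => ?_⟩
  · simpa [z, Submodule.norm_coe] using hL
  · have h := ((WeakDual.eval_continuous (K.orthogonalProjectionOnto y)).tendsto L).comp hlim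
    have := (RCLike.continuous_conj.tendsto _).comp h
    convert this using 2
    · simp [ℓ]
    · change _ = starRingEnd 𝕜 (WeakDual.toStrongDual L _)
      rw [← InnerProductSpace.toDual_symm_apply, inner_conj_symm,
        Submodule.inner_orthogonalProjectionOnto_eq_of_mem_right]

theorem isCompactOperator_of_tendsto_of_weakly_null {T : E →L[𝕜] F}
    (hT : ∀ (u : ℕ → E) (M : ℝ), (∀ n, ‖u n‖ ≤ M) →
      (∀ y : E, Tendsto (fun n => inner 𝕜 y (u n)) atTop (𝓝 0)) →
      Tendsto (fun n => T (u n)) atTop (𝓝 0)) :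
    IsCompactOperator T := by
  refine (isCompactOperator_iff_image_closedBall_subset_compact (T : E →ₗ[𝕜] F) one_pos).2
    ⟨_, IsSeqCompact.isCompact ?_, subset_rfl⟩
  intro v hv
  choose u hu hv using hv
  obtain ⟨φ, z, hφ, hz, hlim⟩ := exists_subseq_weakly_tendsto (𝕜 := 𝕜) (M := 1) (x := u)
    fun n => by simpa using hu n
  refine ⟨T z, ⟨z, by simpa using hz, rfl⟩, φ, hφ, ?_⟩
  have hnull := hT (fun k => u (φ k) - z) 2 (fun k => (norm_sub_le _ _).trans (by
      linarith [mem_closedBall_zero_iff.1 (hu (φ k))])) fun y => by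
    simpa [inner_sub_right] using (hlim y).sub_const (inner 𝕜 y z)
  simpa [← hv, Function.comp_def] using hnull.add_const (T z)

variable [CompleteSpace F] in
theorem IsCompactOperator.tendsto_zero_of_weakly_null {T : E →L[𝕜] F} (hT : IsCompactOperator T)
    {u : ℕ → E} {M : ℝ} (hu : ∀ n, ‖u n‖ ≤ M)
    (hw : ∀ y : E, Tendsto (fun n => inner 𝕜 y (u n)) atTop (𝓝 0)) :
    Tendsto (fun n => T (u n)) atTop (𝓝 0) := by
  refine (hT.isCompact_closure_image_closedBall M).tendsto_nhds_of_unique_mapClusterPt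
    (Eventually.of_forall fun n => subset_closure ⟨u n, by simpa using hu n, rfl⟩)
    fun w _ hw' => ?_
  have hTw (y : F) : Tendsto (fun n => inner 𝕜 y (T (u n))) atTop (𝓝 0) := by
    simpa only [← ContinuousLinearMap.adjoint_inner_left] using hw (T.adjoint y)
  have hcluster := hw'.tendsto_comp (((continuous_const (y := w)).inner (𝕜 := 𝕜)
    continuous_id).tendsto w)
  exact inner_self_eq_zero.1 (eq_of_nhds_neBot (ClusterPt.mono hcluster (hTw w)))

end WeakConvergence

namespace SelfAdjointCalculus

variable {ℋ : Type} [NormedAddCommGroup ℋ] [InnerProductSpace ℂ ℋ] [CompleteSpace ℋ]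
  (Φ : SelfAdjointCalculus ℋ)

theorem adjoint_fc_ofReal (f : ℝ → ℝ) :
    (Φ.fc fun t => (f t : ℂ)).adjoint = Φ.fc fun t => (f t : ℂ) := by
  simp [← Φ.fc_star]

theorem re_inner_fc_ofReal_nonneg {f : ℝ → ℝ} (hf : ∀ t ∈ Φ.spectrum, 0 ≤ f t) (u : ℋ) :
    0 ≤ (inner ℂ (Φ.fc (fun t => (f t : ℂ)) u) u).re := by
  set S := Φ.fc fun t => (√(f t) : ℂ)
  have hsq : Φ.fc (fun t => (f t : ℂ)) = S.comp S := by
    rw [← Φ.fc_mul]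
    refine Φ.fc_eqOn _ _ fun t ht => ?_
    simp [← Complex.ofReal_mul, Real.mul_self_sqrt (hf t ht)]
  have hS : S.adjoint = S := Φ.adjoint_fc_ofReal _
  rw [hsq, ContinuousLinearMap.comp_apply]
  nth_rw 1 [← hS]
  rw [S.adjoint_inner_left]
  exact inner_self_nonneg (𝕜 := ℂ)

theorem re_inner_fc_ofReal_mono {f g : ℝ → ℝ} (h : ∀ t ∈ Φ.spectrum, f t ≤ g t) (u : ℋ) :
    (inner ℂ (Φ.fc (fun t => (f t : ℂ)) u) u).re ≤
      (inner ℂ (Φ.fc (fun t => (g t : ℂ)) u) u).re := by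
  have hsplit : Φ.fc (fun t => (g t : ℂ)) =
      Φ.fc (fun t => ((g t - f t : ℝ) : ℂ)) + Φ.fc fun t => (f t : ℂ) := by
    rw [← Φ.fc_add]
    congr 1
    ext t
    simp
  rw [hsplit, add_apply, inner_add_left, Complex.add_re]
  linarith [Φ.re_inner_fc_ofReal_nonneg (fun t ht => sub_nonneg.2 (h t ht)) u]

theorem re_inner_fc_ofReal_le_quadForm {f : ℝ → ℝ} {n : ℕ}
    (hf : ∀ t ∈ Φ.spectrum, f t ≤ min t n) {u : ℋ} (hu : Φ.InFormDomain u) :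
    (inner ℂ (Φ.fc (fun t => (f t : ℂ)) u) u).re ≤ Φ.quadForm u :=
  (Φ.re_inner_fc_ofReal_mono hf u).trans (le_ciSup hu n)

theorem proj_eq_fc_ofReal (I : Set ℝ) :
    Φ.proj I = Φ.fc fun t => ((I.indicator (fun _ => (1 : ℝ)) t : ℝ) : ℂ) := by
  unfold proj
  congr 1
  ext t
  by_cases h : t ∈ I <;> simp [h]

theorem fc_sub (f g : ℝ → ℂ) : Φ.fc (f - g) = Φ.fc f - Φ.fc g := by
  rw [eq_sub_iff_add_eq, ← Φ.fc_add, sub_add_cancel]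

theorem adjoint_proj (I : Set ℝ) : (Φ.proj I).adjoint = Φ.proj I := by
  rw [proj_eq_fc_ofReal, adjoint_fc_ofReal]

theorem proj_comp_proj (I : Set ℝ) : (Φ.proj I).comp (Φ.proj I) = Φ.proj I := by
  unfold proj
  rw [← Φ.fc_mul]
  congr 1
  ext t
  by_cases h : t ∈ I <;> simp [h]

theorem proj_proj (I : Set ℝ) (u : ℋ) : Φ.proj I (Φ.proj I u) = Φ.proj I u := by
  rw [← ContinuousLinearMap.comp_apply, proj_comp_proj]

theorem re_inner_proj_apply_self (I : Set ℝ) (u : ℋ) :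
    (inner ℂ (Φ.proj I u) u).re = ‖Φ.proj I u‖ ^ 2 := by
  rw [← Φ.proj_proj I u]
  nth_rw 1 [← Φ.adjoint_proj I]
  rw [ContinuousLinearMap.adjoint_inner_left, Φ.proj_proj, inner_self_eq_norm_sq_to_K]
  norm_cast

theorem norm_proj_apply_le (I : Set ℝ) (u : ℋ) : ‖Φ.proj I u‖ ≤ ‖u‖ := by
  simpa using (Φ.proj I).le_of_opNorm_le (Φ.fc_norm _ 1 fun t _ => by
    by_cases h : t ∈ I <;> simp [h]) u

theorem inner_proj_right (I : Set ℝ) (y u : ℋ) :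
    inner ℂ y (Φ.proj I u) = inner ℂ (Φ.proj I y) u := by
  rw [← ContinuousLinearMap.adjoint_inner_left, adjoint_proj]

variable {Φ}

theorem proj_Icc_add_proj_Ioi {γ : ℝ} (hγ : Φ.spectrum ⊆ Ici γ) (R : ℝ) (u : ℋ) :
    Φ.proj (Icc γ R) u + Φ.proj (Ioi R) u = u := by
  have h : Φ.proj (Icc γ R) + Φ.proj (Ioi R) = ContinuousLinearMap.id ℂ ℋ := by
    unfold proj
    rw [← Φ.fc_add, ← Φ.fc_one]
    refine Φ.fc_eqOn _ _ fun t ht => ?_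
    have htγ : γ ≤ t := hγ ht
    by_cases hR : t ≤ R
    · simp [htγ, hR]
    · simp [hR, lt_of_not_ge hR]
  simpa using congr($h u)

theorem mul_norm_proj_Ioi_sq_le {γ : ℝ} (hγ : Φ.spectrum ⊆ Ici γ) (R : ℝ) {u : ℋ}
    (hu : Φ.InFormDomain u) :
    R * ‖Φ.proj (Ioi R) u‖ ^ 2 ≤ Φ.quadForm u + |γ| * ‖u‖ ^ 2 := by
  set f : ℝ → ℝ := fun t => R * (Ioi R).indicator (fun _ => 1) t - |γ|
  have hfc : Φ.fc (fun t => (f t : ℂ)) =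
      (R : ℂ) • Φ.proj (Ioi R) - ((|γ| : ℝ) : ℂ) • ContinuousLinearMap.id ℂ ℋ := by
    have hfun : (fun t => (f t : ℂ)) =
        (R : ℂ) • (Ioi R).indicator (fun _ => 1) - ((|γ| : ℝ) : ℂ) • fun _ => 1 := by
      ext t
      by_cases h : t ∈ Ioi R <;> simp [f, h]
    rw [hfun, Φ.fc_sub, Φ.fc_smul, Φ.fc_smul, Φ.fc_one, proj]
  have hf : ∀ t ∈ Φ.spectrum, f t ≤ min t ⌈R⌉₊ := by
    intro t ht
    have htγ : γ ≤ t := hγ ht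
    by_cases htR : R < t <;> simp only [f, indicator_apply, mem_Ioi, htR, if_true,
      if_false, le_min_iff] <;> constructor <;>
      linarith [Nat.le_ceil R, neg_abs_le γ, abs_nonneg γ, Nat.cast_nonneg (α := ℝ) ⌈R⌉₊]
  have h := Φ.re_inner_fc_ofReal_le_quadForm hf hu
  rw [hfc] at h
  simpa [re_inner_proj_apply_self, ← Complex.ofReal_pow] using h

theorem formApprox_le_of_proj_apply_eq {I : Set ℝ} {r : ℝ} (hr : 0 ≤ r)
    (hI : I ⊆ Metric.closedBall 0 r) {u : ℋ} (hu : Φ.proj I u = u) (n : ℕ) :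
    Φ.formApprox n u ≤ r * ‖u‖ ^ 2 := by
  set T := Φ.fc ((fun t => ((min t n : ℝ) : ℂ)) * I.indicator fun _ => 1) with hT
  have hTu : Φ.fc (fun t => ((min t n : ℝ) : ℂ)) u = T u := by
    rw [hT, Φ.fc_mul, ContinuousLinearMap.comp_apply]
    exact congrArg _ hu.symm
  have hTr : ‖T‖ ≤ r := by
    refine Φ.fc_norm _ _ fun t _ => ?_
    by_cases ht : t ∈ I
    · have htr : |t| ≤ r := by simpa using hI ht
      simp only [Pi.mul_apply, indicator_of_mem ht, mul_one, Complex.norm_real,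
        Real.norm_eq_abs]
      refine le_trans ?_ htr
      rcases le_total t n with h | h
      · rw [min_eq_left h]
      · rw [min_eq_right h, abs_of_nonneg (Nat.cast_nonneg n)]
        exact h.trans (le_abs_self t)
    · simpa [ht] using hr
  calc Φ.formApprox n u = (inner ℂ (T u) u).re := by rw [formApprox, hTu]
    _ ≤ ‖T u‖ * ‖u‖ := re_inner_le_norm (𝕜 := ℂ) _ _
    _ ≤ ‖T‖ * ‖u‖ * ‖u‖ := by gcongr; exact T.le_opNorm u
    _ ≤ r * ‖u‖ * ‖u‖ := by gcongr
    _ = r * ‖u‖ ^ 2 := by ring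

theorem RelCompactWrt.tendsto_norm_apply {γ : ℝ} (hγ : Φ.spectrum ⊆ Ici γ)
    {B : ℋ →L[ℂ] ℋ} (hB : RelCompactWrt B Φ) {C : ℝ} {ψ : ℕ → ℋ}
    (hdom : ∀ n, Φ.InFormDomain (ψ n)) (hform : ∀ n, Φ.quadForm (ψ n) ≤ C)
    (hnorm : ∀ n, ‖ψ n‖ ≤ C) (hweak : ∀ y : ℋ, Tendsto (fun n => inner ℂ y (ψ n)) atTop (𝓝 0)) :
    Tendsto (fun n => ‖B (ψ n)‖) atTop (𝓝 0) := by
  refine tendsto_zero_of_forall_le_add (fun n => norm_nonneg _) fun ε hε => ?_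
  have hC : 0 ≤ C := (norm_nonneg _).trans (hnorm 0)
  set D := C + |γ| * C ^ 2
  set R := ‖B‖ ^ 2 * D / ε ^ 2 + 1
  have hR : 0 < R := by positivity
  refine ⟨fun n => ‖B (Φ.proj (Icc γ R) (ψ n))‖, ?_, fun n => ?_⟩
  · simpa using ((hB _ measurableSet_Icc (Metric.isBounded_Icc _ _)).tendsto_zero_of_weakly_null
      hnorm hweak).norm
  have hbelow : R * ‖Φ.proj (Ioi R) (ψ n)‖ ^ 2 ≤ D := by
    have := pow_le_pow_left₀ (norm_nonneg _) (hnorm n) 2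
    linarith [mul_norm_proj_Ioi_sq_le hγ R (hdom n), hform n,
      mul_le_mul_of_nonneg_left this (abs_nonneg γ)]
  have htail : ‖B‖ * ‖Φ.proj (Ioi R) (ψ n)‖ ≤ ε := by
    refine (pow_le_pow_iff_left₀ (by positivity) hε.le two_ne_zero).1 ?_
    have hRε : ‖B‖ ^ 2 * D = (R - 1) * ε ^ 2 := by simp only [R]; field_simp; ring
    refine le_of_mul_le_mul_left ?_ hR
    nlinarith [mul_le_mul_of_nonneg_left hbelow (sq_nonneg ‖B‖), sq_nonneg ε]
  calc ‖B (ψ n)‖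
      = ‖B (Φ.proj (Icc γ R) (ψ n)) + B (Φ.proj (Ioi R) (ψ n))‖ := by
        rw [← map_add, proj_Icc_add_proj_Ioi hγ]
    _ ≤ ‖B (Φ.proj (Icc γ R) (ψ n))‖ + ‖B‖ * ‖Φ.proj (Ioi R) (ψ n)‖ :=
        (norm_add_le _ _).trans (by gcongr; exact B.le_opNorm _)
    _ ≤ ‖B (Φ.proj (Icc γ R) (ψ n))‖ + ε := by gcongr

theorem relCompactWrt_of_forall_tendsto {B : ℋ →L[ℂ] ℋ}
    (h : ∀ C > (0 : ℝ), ∀ ψ : ℕ → ℋ, (∀ n, Φ.InFormDomain (ψ n)) →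
      (∀ n, Φ.quadForm (ψ n) ≤ C) → (∀ n, ‖ψ n‖ ≤ C) →
      (∀ y : ℋ, Tendsto (fun n => inner ℂ y (ψ n)) atTop (𝓝 0)) →
      Tendsto (fun n => ‖B (ψ n)‖) atTop (𝓝 0)) :
    RelCompactWrt B Φ := by
  intro I _ hI
  obtain ⟨r, hIr⟩ := hI.subset_closedBall 0
  have hI' : I ⊆ Metric.closedBall 0 (max r 0) :=
    hIr.trans (Metric.closedBall_subset_closedBall (le_max_left _ _))
  refine isCompactOperator_of_tendsto_of_weakly_null fun u M hu hw => ?_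
  have hM : 0 ≤ M := (norm_nonneg _).trans (hu 0)
  set ψ := fun n => Φ.proj I (u n)
  have hψ (n : ℕ) : ‖ψ n‖ ≤ M := (Φ.norm_proj_apply_le I (u n)).trans (hu n)
  have happrox (n k : ℕ) : Φ.formApprox k (ψ n) ≤ max r 0 * M ^ 2 :=
    (Φ.formApprox_le_of_proj_apply_eq (le_max_right _ _) hI' (Φ.proj_proj I _) k).trans
      (by gcongr; exact hψ n)
  have hrM : 0 ≤ max r 0 * M ^ 2 := by positivity
  have hBψ := h (max r 0 * M ^ 2 + M + 1) (by positivity) ψ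
    (fun n => ⟨_, forall_mem_range.2 (happrox n)⟩)
    (fun n => (ciSup_le (happrox n)).trans (by linarith))
    (fun n => (hψ n).trans (by linarith))
    (fun y => by simpa [ψ, inner_proj_right] using hw (Φ.proj I y))
  simpa [ψ] using tendsto_zero_iff_norm_tendsto_zero.2 hBψ

end SelfAdjointCalculus

/-- For `H ≥ γ` semibounded with form `h` on `Q(H)`, the operator `B` is
`H`-relatively compact iff every sequence in `Q(H)` with bounded form and norm which
converges weakly to `0` is mapped by `B` to a norm-null sequence. -/
theorem stmt5 {ℋ : Type} [NormedAddCommGroup ℋ] [InnerProductSpace ℂ ℋ] [CompleteSpace ℋ]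
    (Φ : SelfAdjointCalculus ℋ) (γ : ℝ) (hγ : Φ.spectrum ⊆ Set.Ici γ)
    (B : ℋ →L[ℂ] ℋ) :
    SelfAdjointCalculus.RelCompactWrt B Φ ↔
      ∀ C > (0 : ℝ), ∀ ψ : ℕ → ℋ,
        (∀ n, Φ.InFormDomain (ψ n)) →
        (∀ n, Φ.quadForm (ψ n) ≤ C) →
        (∀ n, ‖ψ n‖ ≤ C) →
        (∀ y : ℋ, Filter.Tendsto (fun n => (inner ℂ y (ψ n) : ℂ)) Filter.atTop (nhds 0)) →
        Filter.Tendsto (fun n => ‖B (ψ n)‖) Filter.atTop (nhds 0) :=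
  ⟨fun hB _ _ _ hdom hform hnorm hweak => hB.tendsto_norm_apply hγ hdom hform hnorm hweak,
    SelfAdjointCalculus.relCompactWrt_of_forall_tendsto⟩
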